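/- Let X_i = x_i + ε_i/θ for i = 1,...,n, where x_1 > x_2 > ... > x_n are fixed reals, ε_i are i.i.d. with a continuous distribution having a density positive on all of ℝ, and θ > 0. Then the probability that X_1 = max_i X_i is strictly increasing in θ. -/

import Mathlib

/-!
Shifting the noise by `ε i ↦ ε i - ε i₀`, the event that `i₀` is ranked first reads
`ε i - ε i₀ ≤ θ (x i₀ - x i)` for all `i`, which grows with `θ`. For `θ₁ < θ₂`, the points
with `θ₁ (x i₀ - x i) < ε i - ε i₀ < θ₂ (x i₀ - x i)` for every `i ≠ i₀` form a nonempty open set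
that lies in the event for `θ₂` but not for `θ₁`; a noise law with an everywhere positive density
charges every nonempty open set, so the probability increases strictly.
-/

open MeasureTheory

lemma measure_lt_measure_of_isOpen_subset_diff {X : Type*} [TopologicalSpace X]
    [MeasurableSpace X] [OpensMeasurableSpace X] {μ : Measure X} [μ.IsOpenPosMeasure]
    {s t U : Set X} (hst : s ⊆ t) (hU : IsOpen U) (hUne : U.Nonempty) (hUst : U ⊆ t \ s)
    (hs : μ s ≠ ⊤) : μ s < μ t :=
  calc μ s < μ s + μ U := ENNReal.lt_add_right hs (hU.measure_ne_zero μ hUne)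
    _ = μ (s ∪ U) :=
      (measure_union (Set.disjoint_left.2 fun _ hs hU => (hUst hU).2 hs) hU.measurableSet).symm
    _ ≤ μ t := measure_mono (Set.union_subset hst fun _ hU => (hUst hU).1)

lemma isOpenPosMeasure_withDensity_ofReal {X : Type*} [TopologicalSpace X] [MeasurableSpace X]
    {μ : Measure X} [μ.IsOpenPosMeasure] {f : X → ℝ} (hf : AEMeasurable f μ)
    (hf_pos : ∀ᵐ x ∂μ, 0 < f x) :
    (μ.withDensity fun x => ENNReal.ofReal (f x)).IsOpenPosMeasure :=
  (withDensity_absolutelyContinuous' hf.ennreal_ofReal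
    (hf_pos.mono fun _ hx => ENNReal.ofReal_pos.2 hx |>.ne')).isOpenPosMeasure

section TopEvent

variable {ι : Type*} (x : ι → ℝ) (i₀ : ι)

def topEvent (θ : ℝ) : Set (ι → ℝ) :=
  {ε | ∀ i, x i + ε i / θ ≤ x i₀ + ε i₀ / θ}

variable {x i₀}

lemma mem_topEvent_iff {θ : ℝ} (hθ : 0 < θ) {ε : ι → ℝ} :
    ε ∈ topEvent x i₀ θ ↔ ∀ i, ε i - ε i₀ ≤ θ * (x i₀ - x i) := by
  refine forall_congr' fun i => ?_
  calc x i + ε i / θ ≤ x i₀ + ε i₀ / θ ↔ (ε i - ε i₀) / θ ≤ x i₀ - x i := by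
        rw [sub_div]; constructor <;> intro h <;> linarith
    _ ↔ ε i - ε i₀ ≤ θ * (x i₀ - x i) := by rw [div_le_iff₀ hθ, mul_comm]

lemma topEvent_mono (hx : ∀ i, x i ≤ x i₀) {θ₁ θ₂ : ℝ} (hθ₁ : 0 < θ₁) (h : θ₁ ≤ θ₂) :
    topEvent x i₀ θ₁ ⊆ topEvent x i₀ θ₂ := fun ε hε => by
  rw [mem_topEvent_iff (hθ₁.trans_le h)]
  intro i
  calc ε i - ε i₀ ≤ θ₁ * (x i₀ - x i) := (mem_topEvent_iff hθ₁).1 hε i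
    _ ≤ θ₂ * (x i₀ - x i) := mul_le_mul_of_nonneg_right h (sub_nonneg.2 (hx i))

lemma exists_isOpen_subset_topEvent_diff [Finite ι] (hx : ∀ i ≠ i₀, x i < x i₀) {j : ι}
    (hj : j ≠ i₀) {θ₁ θ₂ : ℝ} (hθ₁ : 0 < θ₁) (h : θ₁ < θ₂) :
    ∃ U, IsOpen U ∧ U.Nonempty ∧ U ⊆ topEvent x i₀ θ₂ \ topEvent x i₀ θ₁ := by
  set U : Set (ι → ℝ) := {ε | ∀ i, i ≠ i₀ →
    θ₁ * (x i₀ - x i) < ε i - ε i₀ ∧ ε i - ε i₀ < θ₂ * (x i₀ - x i)}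
  refine ⟨U, ?_, ?_, fun ε hε => ⟨?_, ?_⟩⟩
  · simp only [U, Set.ofPred_forall]
    refine isOpen_iInter_of_finite fun i => isOpen_iInter_of_finite fun _ => ?_
    have hcont : Continuous fun ε : ι → ℝ => ε i - ε i₀ := by fun_prop
    exact (isOpen_lt continuous_const hcont).inter (isOpen_lt hcont continuous_const)
  · refine ⟨fun i => (θ₁ + θ₂) / 2 * (x i₀ - x i), fun i hi => ?_⟩
    have hgap : 0 < x i₀ - x i := sub_pos.2 (hx i hi)
    simp only [sub_self, mul_zero, sub_zero]
    constructor <;> nlinarith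
  · rw [mem_topEvent_iff (hθ₁.trans h)]
    intro i
    rcases eq_or_ne i i₀ with rfl | hi
    · simp
    · exact (hε i hi).2.le
  · rw [mem_topEvent_iff hθ₁]
    exact fun hε₁ => (hε₁ j).not_gt (hε j hj).1

theorem strictMonoOn_measure_topEvent [Finite ι] {μ : Measure (ι → ℝ)} [IsFiniteMeasure μ]
    [μ.IsOpenPosMeasure] (hx : ∀ i ≠ i₀, x i < x i₀) {j : ι} (hj : j ≠ i₀) :
    StrictMonoOn (fun θ => (μ (topEvent x i₀ θ)).toReal) (Set.Ioi 0) := by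
  intro θ₁ hθ₁ θ₂ _ h
  obtain ⟨U, hU, hUne, hUsub⟩ := exists_isOpen_subset_topEvent_diff hx hj hθ₁ h
  have hle : ∀ i, x i ≤ x i₀ := fun i => by
    rcases eq_or_ne i i₀ with rfl | hi
    exacts [le_rfl, (hx i hi).le]
  exact (ENNReal.toReal_lt_toReal (measure_ne_top _ _) (measure_ne_top _ _)).2 <|
    measure_lt_measure_of_isOpen_subset_diff (topEvent_mono hle hθ₁ h.le) hU hUne hUsub
      (measure_ne_top _ _)

end TopEvent

theorem stmt_15 (n : ℕ) (hn : 2 ≤ n) (x : Fin n → ℝ) (hx : StrictAnti x)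
    (f : ℝ → ℝ) (hf_pos : ∀ t, 0 < f t)
    (hf_int : ∫ t, f t = 1) :
    StrictMonoOn
      (fun θ : ℝ =>
        ((Measure.pi fun _ : Fin n =>
            volume.withDensity fun t => ENNReal.ofReal (f t))
          {ε : Fin n → ℝ | ∀ i : Fin n,
            x i + ε i / θ ≤ x ⟨0, by omega⟩ + ε ⟨0, by omega⟩ / θ}).toReal)
      (Set.Ioi (0 : ℝ)) := by
  have hfi : Integrable f := integrable_of_integral_eq_one hf_int
  have := isFiniteMeasure_withDensity_ofReal hfi.2
  have := isOpenPosMeasure_withDensity_ofReal hfi.aemeasurable (.of_forall hf_pos)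
  exact strictMonoOn_measure_topEvent (x := x) (i₀ := ⟨0, by omega⟩) (j := ⟨1, by omega⟩)
    (fun i hi => hx (Fin.lt_def.2 (Nat.pos_of_ne_zero fun h => hi (Fin.ext h))))
    (by simp [Fin.ext_iff])
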